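/- Let G = C_{n_1} × ... × C_{n_k} with 1 < n_1 | ... | n_k and k ≥ 2, n_{k-1} = n_k = n. Write the last two factors as A = ⟨a⟩ and B = ⟨b⟩, both of order n, and let P = G_1 ⋯ G_{k−2} be the product of the first k−2 factors. For each element x of order n in AB, set H_x = P⟨x⟩. Then the union of the H_x over all such x equals G. -/

import Mathlib

/-!
Lift the coordinates of `g` in `AB` to integers `(u, v)` and write `(u, v) = c • (s, t)` with
`s, t` coprime. Then `x = a ^ s * b ^ t` has order `n`: a Bézout relation `α s + β t = 1` turns
`n ∣ r s` and `n ∣ r t` into `n ∣ r`. Finally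
`g * (x ^ c)⁻¹` is trivial on `A` and `B`, so it lies in `P`.
-/

/-- The abelian group with invariant factors `n 0 ∣ n 1 ∣ ... ∣ n (k-1)`. -/
abbrev IG (k : ℕ) (n : Fin k → ℕ) := ∀ i : Fin k, Multiplicative (ZMod (n i))

/-- The canonical generator of the `i`-th cyclic factor. -/
abbrev gen (k : ℕ) (n : Fin k → ℕ) (i : Fin k) : IG k n :=
  Pi.mulSingle i (Multiplicative.ofAdd (1 : ZMod (n i)))

theorem Int.exists_eq_mul_isCoprime (u v : ℤ) :
    ∃ c s t : ℤ, IsCoprime s t ∧ u = c * s ∧ v = c * t := by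
  rcases (Int.gcd u v).eq_zero_or_pos with h | h
  · obtain ⟨rfl, rfl⟩ := Int.gcd_eq_zero_iff.mp h
    exact ⟨0, 1, 0, isCoprime_one_left, by simp, by simp⟩
  · obtain ⟨s, t, hst, hu, hv⟩ := Int.exists_gcd_one h
    exact ⟨_, s, t, Int.isCoprime_iff_gcd_eq_one.mpr hst, hu.trans (mul_comm _ _),
      hv.trans (mul_comm _ _)⟩

theorem dvd_of_dvd_mul_left_of_dvd_mul_left_of_isCoprime {R : Type*} [CommRing R] {m r s t : R}
    (hst : IsCoprime s t) (hs : m ∣ s * r) (ht : m ∣ t * r) : m ∣ r := by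
  obtain ⟨a, b, hab⟩ := hst
  have hr : r = a * (s * r) + b * (t * r) := by linear_combination -r * hab
  rw [hr]
  exact dvd_add (dvd_mul_of_dvd_right hs a) (dvd_mul_of_dvd_right ht b)

section

variable {k : ℕ} {n : Fin k → ℕ}

theorem gen_zpow (i : Fin k) (z : ℤ) :
    gen k n i ^ z = Pi.mulSingle i (Multiplicative.ofAdd (z : ZMod (n i))) := by
  rw [← Pi.mulSingle_zpow, ← ofAdd_zsmul, zsmul_one]

theorem mem_closure_gen_image_of_forall_notMem {T : Set (Fin k)} {f : IG k n}
    (hf : ∀ j ∉ T, f j = 1) : f ∈ Subgroup.closure (gen k n '' T) := by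
  rw [← Finset.univ_prod_mulSingle f]
  refine Subgroup.prod_mem _ fun j _ => ?_
  by_cases hj : j ∈ T
  · obtain ⟨z, hz⟩ := ZMod.intCast_surjective (f j).toAdd
    rw [← ofAdd_toAdd (f j), ← hz, ← gen_zpow]
    exact zpow_mem (Subgroup.subset_closure (Set.mem_image_of_mem _ hj)) z
  · rw [hf j hj, Pi.mulSingle_one]
    exact one_mem _

theorem gen_zpow_mul_gen_zpow_eq_one_iff {i₁ i₂ : Fin k} (hne : i₁ ≠ i₂) (a b : ℤ) :
    gen k n i₁ ^ a * gen k n i₂ ^ b = 1 ↔ (n i₁ : ℤ) ∣ a ∧ (n i₂ : ℤ) ∣ b := by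
  rw [← ZMod.intCast_zmod_eq_zero_iff_dvd, ← ZMod.intCast_zmod_eq_zero_iff_dvd]
  constructor
  · intro h
    simpa [gen_zpow, hne, hne.symm] using And.intro (congrFun h i₁) (congrFun h i₂)
  · rintro ⟨h₁, h₂⟩
    simp [gen_zpow, h₁, h₂]

theorem orderOf_gen (i : Fin k) : orderOf (gen k n i) = n i := by
  rw [orderOf_piMulSingle, orderOf_ofAdd_eq_addOrderOf, ZMod.addOrderOf_one]

theorem orderOf_gen_zpow_mul_gen_zpow {i₁ i₂ : Fin k} (hne : i₁ ≠ i₂) (hn : n i₁ = n i₂)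
    {s t : ℤ} (hst : IsCoprime s t) : orderOf (gen k n i₁ ^ s * gen k n i₂ ^ t) = n i₁ := by
  rw [← orderOf_gen (n := n) i₁, orderOf_eq_orderOf_iff]
  intro r
  rw [← zpow_natCast, ← zpow_natCast (gen k n i₁), mul_zpow, ← zpow_mul, ← zpow_mul,
    gen_zpow_mul_gen_zpow_eq_one_iff hne, ← orderOf_dvd_iff_zpow_eq_one, orderOf_gen, ← hn]
  exact ⟨fun h => dvd_of_dvd_mul_left_of_dvd_mul_left_of_isCoprime hst h.1 h.2,
    fun h => ⟨dvd_mul_of_dvd_right h s, dvd_mul_of_dvd_right h t⟩⟩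

theorem exists_orderOf_eq_and_mem_closure_sup_zpowers {i₁ i₂ : Fin k} (hne : i₁ ≠ i₂)
    (hn : n i₁ = n i₂) {S : Set (Fin k)} (hS : ∀ j ∉ S, j = i₁ ∨ j = i₂) (g : IG k n) :
    ∃ x ∈ Subgroup.closure {gen k n i₁, gen k n i₂}, orderOf x = n i₁ ∧
      g ∈ Subgroup.closure (gen k n '' S) ⊔ Subgroup.zpowers x := by
  obtain ⟨u, hu⟩ := ZMod.intCast_surjective (g i₁).toAdd
  obtain ⟨v, hv⟩ := ZMod.intCast_surjective (g i₂).toAdd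
  obtain ⟨c, s, t, hst, rfl, rfl⟩ := Int.exists_eq_mul_isCoprime u v
  set x := gen k n i₁ ^ s * gen k n i₂ ^ t
  have hxc : x ^ c = gen k n i₁ ^ (c * s) * gen k n i₂ ^ (c * t) := by
    rw [mul_zpow, ← zpow_mul, ← zpow_mul, mul_comm s, mul_comm t]
  refine ⟨x, mul_mem (zpow_mem (Subgroup.subset_closure (by simp)) s)
      (zpow_mem (Subgroup.subset_closure (by simp)) t),
    orderOf_gen_zpow_mul_gen_zpow hne hn hst, ?_⟩
  rw [← div_mul_cancel g (x ^ c)]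
  refine mul_mem (Subgroup.mem_sup_left (mem_closure_gen_image_of_forall_notMem fun j hj => ?_))
    (Subgroup.mem_sup_right (Subgroup.zpow_mem_zpowers x c))
  rw [Pi.div_apply, div_eq_one, hxc]
  rcases hS j hj with rfl | rfl
  · simp [gen_zpow, hne, hu]
  · simp [gen_zpow, hne.symm, hv]

end

theorem stmt_15 (k : ℕ) (hk : 2 ≤ k) (n : Fin k → ℕ) (nn : ℕ)
    (heq1 : n ⟨k - 2, by omega⟩ = nn) (heq2 : n ⟨k - 1, by omega⟩ = nn) :
    (⋃ x ∈ {x : IG k n |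
        x ∈ Subgroup.closure {gen k n ⟨k - 2, by omega⟩, gen k n ⟨k - 1, by omega⟩} ∧
        orderOf x = nn},
      ((Subgroup.closure (gen k n '' {j : Fin k | (j : ℕ) < k - 2}) ⊔
          Subgroup.zpowers x : Subgroup (IG k n)) : Set (IG k n))) = Set.univ := by
  have hne : (⟨k - 2, by omega⟩ : Fin k) ≠ ⟨k - 1, by omega⟩ := by
    simp only [ne_eq, Fin.mk.injEq]
    omega
  have hS : ∀ j ∉ {j : Fin k | (j : ℕ) < k - 2},
      j = ⟨k - 2, by omega⟩ ∨ j = ⟨k - 1, by omega⟩ := by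
    intro j hj
    simp only [Set.mem_ofPred_eq, not_lt] at hj
    simp only [Fin.ext_iff]
    omega
  refine Set.eq_univ_of_forall fun g => ?_
  obtain ⟨x, hx, hord, hg⟩ :=
    exists_orderOf_eq_and_mem_closure_sup_zpowers hne (heq1.trans heq2.symm) hS g
  exact Set.mem_biUnion ⟨hx, hord.trans heq1⟩ hg
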